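/- Let V1, V2, W1, W2 be complete lattices and let f : V1 → W1 and g : V2 → W2 preserve arbitrary suprema. Then there exists a unique suprema-preserving map f ⊗ g : V1 ⊗ V2 → W1 ⊗ W2 satisfying (f ⊗ g)(x ⊼ y) = f(x) ⊼ g(y) for all x ∈ V1, y ∈ V2. Moreover, if f and g additionally preserve arbitrary infima, then so does f ⊗ g. -/

import Mathlib

open Set

/-- A formal context `(G, M, I)`: a set of objects, a set of attributes,
and an incidence relation between them. -/
structure FormalContext where
  G : Type*
  M : Type*
  I : G → M → Prop

namespace FormalContext

variable (K : FormalContext)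

/-- `A'` for a set of objects `A ⊆ G`. -/
def polarG (A : Set K.G) : Set K.M := upperPolar K.I A

/-- `B'` for a set of attributes `B ⊆ M`. -/
def polarM (B : Set K.M) : Set K.G := lowerPolar K.I B

/-- The closure `cl(A) = A''` of a set of objects. -/
def clG (A : Set K.G) : Set K.G := K.polarM (K.polarG A)

/-- The closure `cl(B) = B''` of a set of attributes. -/
def clM (B : Set K.M) : Set K.M := K.polarG (K.polarM B)

/-- A set of objects is closed when it equals its closure. -/
def ClosedG (A : Set K.G) : Prop := K.clG A = A

/-- A set of attributes is closed when it equals its closure. -/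
def ClosedM (B : Set K.M) : Prop := K.clM B = B

/-- The dual context `K* = (M, G, I†)`. -/
def dual : FormalContext := ⟨K.M, K.G, fun m g => K.I g m⟩

/-- The direct product `K1 ⊗ K2` of formal contexts (Ganter–Wille). -/
def dprod (K1 K2 : FormalContext) : FormalContext :=
  ⟨K1.G × K2.G, K1.M × K2.M, fun g m => K1.I g.1 m.1 ∨ K2.I g.2 m.2⟩

end FormalContext

/-- The trivial context `I = ({⋆},{⋆},≠)`. -/
def trivCxt : FormalContext := ⟨PUnit, PUnit, fun a b => a ≠ b⟩

/-- The image `R(S)` of a set under a relation. -/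
def relImage {X Y : Type*} (R : X → Y → Prop) (S : Set X) : Set Y :=
  {y | ∃ x ∈ S, R x y}

/-- `R^•(T) = {x | R(x) ⊆ T}`. -/
def relDot {X Y : Type*} (R : X → Y → Prop) (T : Set Y) : Set X :=
  {x | ∀ y, R x y → y ∈ T}

/-- `R_•(S) = {y | ∀ x ∈ S, R(x,y)}`. -/
def relLower {X Y : Type*} (R : X → Y → Prop) (S : Set X) : Set Y :=
  {y | ∀ x ∈ S, R x y}

/-- A closed relation `K1 → K2`: each row `R(g)` is closed in `K2` and
`R^•` preserves closed sets. -/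
structure IsClosedRel (K1 K2 : FormalContext) (R : K1.G → K2.G → Prop) : Prop where
  row_closed : ∀ g : K1.G, K2.ClosedG (relImage R {g})
  dot_closed : ∀ Y : Set K2.G, K2.ClosedG Y → K1.ClosedG (relDot R Y)

/-- Composition of closed relations: `(S ∘ R)(g) := cl(S(R(g)))`, closure in `K`. -/
def relComp {X Y : Type*} (K : FormalContext) (S : Y → K.G → Prop) (R : X → Y → Prop) :
    X → K.G → Prop :=
  fun g h => h ∈ K.clG (relImage S (relImage R {g}))

/-- Composition on the attribute side: `(S ∘ R)(m) := cl(S(R(m)))`, closure on the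
attribute side of `K`. -/
def relCompM {X Y : Type*} (K : FormalContext) (S : Y → K.M → Prop) (R : X → Y → Prop) :
    X → K.M → Prop :=
  fun m n => n ∈ K.clM (relImage S (relImage R {m}))

/-- The identity closed relation on `K`: `g ↦ cl({g})`. -/
def idClosedRel (K : FormalContext) : K.G → K.G → Prop := fun g h => h ∈ K.clG {g}

/-- A Chu correspondence `(R,S) : K1 → K2`. -/
structure IsChu (K1 K2 : FormalContext) (R : K1.G → K2.G → Prop) (S : K2.M → K1.M → Prop) :
    Prop where
  extent_closed : ∀ g : K1.G, K2.ClosedG (relImage R {g})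
  intent_closed : ∀ m : K2.M, K1.ClosedM (relImage S {m})
  adj : ∀ (g : K1.G) (m : K2.M),
    (∀ h ∈ relImage R {g}, K2.I h m) ↔ (∀ n ∈ relImage S {m}, K1.I g n)

/-- The intent relation `R*(m) := (R^•(m'))'` of a (closed) relation `R`. -/
def starRel (K1 K2 : FormalContext) (R : K1.G → K2.G → Prop) : K2.M → K1.M → Prop :=
  fun m n => n ∈ K1.polarG (relDot R (K2.polarM {m}))

/-- A bond from `K1` to `K2`: a relation `B ⊆ G1 × M2` with closed rows and columns. -/
structure IsBond (K1 K2 : FormalContext) (B : K1.G → K2.M → Prop) : Prop where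
  row_closed : ∀ g : K1.G, K2.ClosedM (relImage B {g})
  col_closed : ∀ m : K2.M, K1.ClosedG {g | B g m}

/-- The tensor `(R1 ⊗ R2)(g1,g2) := cl(R1(g1) × R2(g2))` of relations, closure in `K3 ⊗ K4`. -/
def tensorRelMor (K3 K4 : FormalContext) {X Y : Type*}
    (R1 : X → K3.G → Prop) (R2 : Y → K4.G → Prop) :
    X × Y → (K3.dprod K4).G → Prop :=
  fun p q => q ∈ (K3.dprod K4).clG (relImage R1 {p.1} ×ˢ relImage R2 {p.2})

/-- The concept of `K` generated by a set of objects `A`: `(cl(A), A')`. -/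
def conceptOfSet (K : FormalContext) (A : Set K.G) : Concept K.G K.M K.I where
  extent := K.clG A
  intent := K.polarG A
  upperPolar_extent := upperPolar_lowerPolar_upperPolar K.I A
  lowerPolar_intent := rfl

/-- The sup-lattice map `ℬ(R)` on concept lattices induced by a relation:
`(A,A') ↦ (cl(R(A)), R(A)')`. -/
def conceptMap (K1 K2 : FormalContext) (R : K1.G → K2.G → Prop) :
    Concept K1.G K1.M K1.I → Concept K2.G K2.M K2.I :=
  fun c => conceptOfSet K2 (relImage R c.extent)

/-- The incidence relation of the context whose concept lattice is the concept tensor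
`V1 ⊗ V2`: `(x,y) ∇ (w,z) iff x ≤ w or y ≤ z`. -/
def tensorRel (V1 V2 : Type*) [CompleteLattice V1] [CompleteLattice V2] :
    V1 × V2 → V1 × V2 → Prop :=
  fun p q => p.1 ≤ q.1 ∨ p.2 ≤ q.2

/-- The concept tensor `V1 ⊗ V2` of complete lattices (Wille's tensor product). -/
abbrev ConceptTensor (V1 V2 : Type*) [CompleteLattice V1] [CompleteLattice V2] :=
  Concept (V1 × V2) (V1 × V2) (tensorRel V1 V2)

/-- The tensorial operation `x ⊼ y`: the concept with extent `cl{(x,y)}` and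
intent `{(x,y)}'`. -/
def wedge {V1 V2 : Type*} [CompleteLattice V1] [CompleteLattice V2] (x : V1) (y : V2) :
    ConceptTensor V1 V2 where
  extent := lowerPolar (tensorRel V1 V2) (upperPolar (tensorRel V1 V2) {(x, y)})
  intent := upperPolar (tensorRel V1 V2) {(x, y)}
  upperPolar_extent := upperPolar_lowerPolar_upperPolar _ _
  lowerPolar_intent := rfl

/-- Two subsets of a complete lattice are mutually distributive: all families indexed
by a set `ι` satisfy the two distributivity laws. -/
def MutuallyDistrib {M : Type u} [CompleteLattice M] (X Y : Set M) : Prop :=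
  ∀ (ι : Type u) (x y : ι → M), (∀ i, x i ∈ X) → (∀ i, y i ∈ Y) →
    ((⨆ i, x i ⊓ y i) = ⨅ J : Set ι, ((⨆ j ∈ J, x j) ⊔ ⨆ k ∈ Jᶜ, y k)) ∧
    ((⨅ i, x i ⊔ y i) = ⨆ J : Set ι, ((⨅ j ∈ J, x j) ⊓ ⨅ k ∈ Jᶜ, y k))
namespace TensorOfMapsAux

variable {V1 V2 W1 W2 : Type*} [CompleteLattice V1] [CompleteLattice V2]
  [CompleteLattice W1] [CompleteLattice W2]

lemma tensorRel_iff {p q : V1 × V2} : tensorRel V1 V2 p q ↔ p.1 ≤ q.1 ∨ p.2 ≤ q.2 := Iff.rfl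

lemma mono_of_sSup {f : V1 → W1} (hf : ∀ s : Set V1, f (sSup s) = sSup (f '' s)) :
    Monotone f := by
  intro a b hab
  have h := hf {a, b}
  rw [sSup_pair, sup_eq_right.2 hab] at h
  rw [h]
  exact le_sSup ⟨a, by simp⟩

lemma radj {f : V1 → W1} (hf : ∀ s : Set V1, f (sSup s) = sSup (f '' s)) (x : V1) (p : W1) :
    f x ≤ p ↔ x ≤ sSup {w | f w ≤ p} := by
  constructor
  · exact fun h => le_sSup h
  · intro h
    calc f x ≤ f (sSup {w | f w ≤ p}) := mono_of_sSup hf h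
      _ = sSup (f '' {w | f w ≤ p}) := hf _
      _ ≤ p := sSup_le (by rintro _ ⟨w, hw, rfl⟩; exact hw)

lemma ladj {f : V1 → W1} (hf : ∀ s : Set V1, f (sSup s) = sSup (f '' s))
    (hf' : ∀ s : Set V1, f (sInf s) = sInf (f '' s)) (x : V1) (p : W1) :
    sInf {w | p ≤ f w} ≤ x ↔ p ≤ f x := by
  constructor
  · intro h
    calc p ≤ sInf (f '' {w | p ≤ f w}) := le_sInf (by rintro _ ⟨w, hw, rfl⟩; exact hw)
      _ = f (sInf {w | p ≤ f w}) := (hf' _).symm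
      _ ≤ f x := mono_of_sSup hf h
  · exact fun h => sInf_le h

lemma key_mem {f : V1 → W1} {g : V2 → W2}
    (hf : ∀ s : Set V1, f (sSup s) = sSup (f '' s))
    (hg : ∀ s : Set V2, g (sSup s) = sSup (g '' s))
    (A : Set (V1 × V2)) {p : V1 × V2}
    (hp : p ∈ lowerPolar (tensorRel V1 V2) (upperPolar (tensorRel V1 V2) A)) :
    (f p.1, g p.2) ∈ lowerPolar (tensorRel W1 W2)
      (upperPolar (tensorRel W1 W2) ((fun q : V1 × V2 => (f q.1, g q.2)) '' A)) := by
  intro uv huv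
  have h1 : (sSup {w | f w ≤ uv.1}, sSup {z | g z ≤ uv.2}) ∈
      upperPolar (tensorRel V1 V2) A := by
    intro a ha
    rcases huv (mem_image_of_mem _ ha) with h | h
    · exact Or.inl ((radj hf _ _).1 h)
    · exact Or.inr ((radj hg _ _).1 h)
  rcases hp h1 with h | h
  · exact Or.inl ((radj hf _ _).2 h)
  · exact Or.inr ((radj hg _ _).2 h)

lemma cl_mono {α β : Type*} (r : α → β → Prop) {A B : Set α} (h : A ⊆ B) :
    lowerPolar r (upperPolar r A) ⊆ lowerPolar r (upperPolar r B) :=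
  lowerPolar_anti _ (upperPolar_anti _ h)

lemma cl_image_cl {f : V1 → W1} {g : V2 → W2}
    (hf : ∀ s : Set V1, f (sSup s) = sSup (f '' s))
    (hg : ∀ s : Set V2, g (sSup s) = sSup (g '' s))
    (A : Set (V1 × V2)) :
    lowerPolar (tensorRel W1 W2) (upperPolar (tensorRel W1 W2)
      ((fun q : V1 × V2 => (f q.1, g q.2)) ''
        lowerPolar (tensorRel V1 V2) (upperPolar (tensorRel V1 V2) A))) =
    lowerPolar (tensorRel W1 W2) (upperPolar (tensorRel W1 W2)
      ((fun q : V1 × V2 => (f q.1, g q.2)) '' A)) := by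
  apply subset_antisymm
  · have h : ((fun q : V1 × V2 => (f q.1, g q.2)) ''
        lowerPolar (tensorRel V1 V2) (upperPolar (tensorRel V1 V2) A)) ⊆
        lowerPolar (tensorRel W1 W2) (upperPolar (tensorRel W1 W2)
          ((fun q : V1 × V2 => (f q.1, g q.2)) '' A)) := by
      rintro _ ⟨p, hp, rfl⟩; exact key_mem hf hg A hp
    refine (cl_mono _ h).trans ?_
    rw [upperPolar_lowerPolar_upperPolar]
  · exact cl_mono _ (image_mono (subset_lowerPolar_upperPolar _ _))

lemma mem_wedge_fst (x : V1) (y : V2) : (x, y) ∈ (wedge x y).extent :=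
  subset_lowerPolar_upperPolar _ _ (mem_singleton _)

lemma wedge_le_iff {x : V1} {y : V2} {c : ConceptTensor V1 V2} :
    wedge x y ≤ c ↔ (x, y) ∈ c.extent := by
  constructor
  · intro h
    exact (Concept.extent_subset_extent_iff.2 h) (mem_wedge_fst x y)
  · intro h
    rw [← Concept.extent_subset_extent_iff]
    show lowerPolar _ (upperPolar _ {(x, y)}) ⊆ c.extent
    have h1 : ({(x, y)} : Set (V1 × V2)) ⊆ c.extent := singleton_subset_iff.2 h
    calc lowerPolar _ (upperPolar _ {(x, y)})
        ⊆ lowerPolar _ (upperPolar _ c.extent) := cl_mono _ h1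
      _ = c.extent := by rw [c.upperPolar_extent, c.lowerPolar_intent]

/-- The tensor map `f ⊗ g`. -/
def tmap (f : V1 → W1) (g : V2 → W2) (c : ConceptTensor V1 V2) : ConceptTensor W1 W2 :=
  sSup ((fun p : V1 × V2 => wedge (f p.1) (g p.2)) '' c.extent)

lemma tmap_fst (f : V1 → W1) (g : V2 → W2) (c : ConceptTensor V1 V2) :
    (tmap f g c).extent = lowerPolar (tensorRel W1 W2) (upperPolar (tensorRel W1 W2)
      ((fun p : V1 × V2 => (f p.1, g p.2)) '' c.extent)) := by
  rw [tmap, Concept.extent_sSup]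
  have h2 : (⋂ d ∈ (fun p : V1 × V2 => wedge (f p.1) (g p.2)) '' c.extent,
      (d : ConceptTensor W1 W2).intent) =
      upperPolar (tensorRel W1 W2) ((fun p : V1 × V2 => (f p.1, g p.2)) '' c.extent) := by
    ext m
    constructor
    · intro hm
      rintro _ ⟨p, hp, rfl⟩
      have h3 := mem_iInter₂.1 hm _ (mem_image_of_mem _ hp)
      exact h3 (mem_singleton _)
    · intro hm
      refine mem_iInter₂.2 ?_
      rintro _ ⟨p, hp, rfl⟩
      rintro _ rfl
      exact hm (mem_image_of_mem _ hp)
  rw [h2]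

lemma tmap_mono (f : V1 → W1) (g : V2 → W2) : Monotone (tmap f g) := by
  intro c d hcd
  exact sSup_le_sSup (image_mono (Concept.extent_subset_extent_iff.2 hcd))

lemma tmap_wedge {f : V1 → W1} {g : V2 → W2}
    (hf : ∀ s : Set V1, f (sSup s) = sSup (f '' s))
    (hg : ∀ s : Set V2, g (sSup s) = sSup (g '' s))
    (x : V1) (y : V2) : tmap f g (wedge x y) = wedge (f x) (g y) := by
  apply Concept.ext
  rw [tmap_fst]
  show lowerPolar _ (upperPolar _
      ((fun p : V1 × V2 => (f p.1, g p.2)) ''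
        lowerPolar (tensorRel V1 V2) (upperPolar (tensorRel V1 V2) {(x, y)}))) =
    lowerPolar _ (upperPolar _ {(f x, g y)})
  rw [cl_image_cl hf hg, image_singleton]

lemma tmap_sSup {f : V1 → W1} {g : V2 → W2}
    (hf : ∀ s : Set V1, f (sSup s) = sSup (f '' s))
    (hg : ∀ s : Set V2, g (sSup s) = sSup (g '' s))
    (S : Set (ConceptTensor V1 V2)) :
    tmap f g (sSup S) = sSup (tmap f g '' S) := by
  apply Concept.ext
  rw [tmap_fst]
  have h1 : (sSup S).extent = lowerPolar (tensorRel V1 V2)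
      (upperPolar (tensorRel V1 V2) (⋃ c ∈ S, (c : ConceptTensor V1 V2).extent)) := by
    rw [Concept.extent_sSup, upperPolar_iUnion₂]
    exact congrArg _ (iInter₂_congr fun c _ => c.upperPolar_extent.symm)
  rw [h1, cl_image_cl hf hg, image_iUnion₂, Concept.extent_sSup, biInter_image]
  rw [upperPolar_iUnion₂]
  refine congrArg _ (iInter₂_congr fun c hc => ?_)
  rw [← (tmap f g c).upperPolar_extent, tmap_fst, upperPolar_lowerPolar_upperPolar]

lemma eq_sSup_wedges (c : ConceptTensor V1 V2) :
    c = sSup ((fun p : V1 × V2 => wedge p.1 p.2) '' c.extent) := by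
  apply Concept.ext'
  rw [Concept.intent_sSup]
  ext m
  rw [← c.upperPolar_extent]
  constructor
  · intro hm
    refine mem_iInter₂.2 ?_
    rintro _ ⟨p, hp, rfl⟩
    rintro _ rfl
    exact hm hp
  · intro hm
    intro p hp
    exact mem_iInter₂.1 hm _ (mem_image_of_mem _ hp) (mem_singleton _)

lemma unique_aux {f : V1 → W1} {g : V2 → W2}
    (h : ConceptTensor V1 V2 → ConceptTensor W1 W2)
    (hsup : ∀ s : Set (ConceptTensor V1 V2), h (sSup s) = sSup (h '' s))
    (hw : ∀ (x : V1) (y : V2), h (wedge x y) = wedge (f x) (g y))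
    (c : ConceptTensor V1 V2) : h c = tmap f g c := by
  conv_lhs => rw [eq_sSup_wedges c]
  rw [hsup, tmap]
  congr 1
  rw [image_image]
  exact image_congr fun p _ => hw p.1 p.2

lemma tmap_sInf {f : V1 → W1} {g : V2 → W2}
    (hf : ∀ s : Set V1, f (sSup s) = sSup (f '' s))
    (hg : ∀ s : Set V2, g (sSup s) = sSup (g '' s))
    (hf' : ∀ s : Set V1, f (sInf s) = sInf (f '' s))
    (hg' : ∀ s : Set V2, g (sInf s) = sInf (g '' s))
    (S : Set (ConceptTensor V1 V2)) :
    tmap f g (sInf S) = sInf (tmap f g '' S) := by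
  apply le_antisymm
  · apply le_sInf
    rintro _ ⟨c, hc, rfl⟩
    exact tmap_mono f g (sInf_le hc)
  · rw [← Concept.extent_subset_extent_iff, tmap_fst, Concept.extent_sInf]
    intro pq hpq
    have hpq' : ∀ c ∈ S, pq ∈ lowerPolar (tensorRel W1 W2)
        (upperPolar (tensorRel W1 W2) ((fun p : V1 × V2 => (f p.1, g p.2)) '' c.extent)) := by
      intro c hc
      have : pq ∈ (tmap f g c).extent := mem_iInter₂.1 hpq _ (mem_image_of_mem _ hc)
      rwa [tmap_fst] at this
    rw [Concept.extent_sInf]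
    intro uv huv
    -- goal: tensorRel pq uv
    have step1 : ∀ c ∈ S, ∀ mn : V1 × V2, mn ∈ (c : ConceptTensor V1 V2).intent →
        pq.1 ≤ f mn.1 ∨ pq.2 ≤ g mn.2 := by
      intro c hc mn hmn
      have hmn' : mn ∈ upperPolar (tensorRel V1 V2) c.extent := by
        rw [c.upperPolar_extent]; exact hmn
      have h2 : (f mn.1, g mn.2) ∈ upperPolar (tensorRel W1 W2)
          ((fun p : V1 × V2 => (f p.1, g p.2)) '' c.extent) := by
        rintro _ ⟨a, ha, rfl⟩
        rcases hmn' ha with h | h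
        · exact Or.inl (mono_of_sSup hf h)
        · exact Or.inr (mono_of_sSup hg h)
      exact hpq' c hc h2
    have step2 : (sInf {w | pq.1 ≤ f w}, sInf {z | pq.2 ≤ g z}) ∈
        lowerPolar (tensorRel V1 V2) (⋃ c ∈ S, (c : ConceptTensor V1 V2).intent) := by
      intro mn hmn
      obtain ⟨c, hc, hmn⟩ := mem_iUnion₂.1 hmn
      rcases step1 c hc mn hmn with h | h
      · exact Or.inl ((ladj hf hf' _ _).2 h)
      · exact Or.inr ((ladj hg hg' _ _).2 h)
    have step3 : (sSup {w | f w ≤ uv.1}, sSup {z | g z ≤ uv.2}) ∈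
        upperPolar (tensorRel V1 V2) (⋂ c ∈ S, (c : ConceptTensor V1 V2).extent) := by
      intro a ha
      rcases huv (mem_image_of_mem _ ha) with h | h
      · exact Or.inl ((radj hf _ _).1 h)
      · exact Or.inr ((radj hg _ _).1 h)
    have step4 : (⋂ c ∈ S, (c : ConceptTensor V1 V2).extent) =
        lowerPolar (tensorRel V1 V2) (⋃ c ∈ S, (c : ConceptTensor V1 V2).intent) := by
      rw [lowerPolar_iUnion₂]
      exact iInter₂_congr fun c _ => c.lowerPolar_intent.symm
    rw [step4] at step3
    rcases step3 step2 with h | h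
    · exact Or.inl (le_trans ((ladj hf hf' _ _).1 le_rfl) ((radj hf _ _).2 h))
    · exact Or.inr (le_trans ((ladj hg hg' _ _).1 le_rfl) ((radj hg _ _).2 h))

end TensorOfMapsAux

/-- For suprema-preserving `f : V1 → W1`, `g : V2 → W2` there is a
unique suprema-preserving `f ⊗ g : V1 ⊗ V2 → W1 ⊗ W2` with
`(f ⊗ g)(x ⊼ y) = f(x) ⊼ g(y)`; if `f` and `g` also preserve infima, so does `f ⊗ g`. -/
theorem tensor_of_maps (V1 V2 W1 W2 : Type*)
    [CompleteLattice V1] [CompleteLattice V2] [CompleteLattice W1] [CompleteLattice W2]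
    (f : V1 → W1) (g : V2 → W2)
    (hf : ∀ s : Set V1, f (sSup s) = sSup (f '' s))
    (hg : ∀ s : Set V2, g (sSup s) = sSup (g '' s)) :
    (∃! h : ConceptTensor V1 V2 → ConceptTensor W1 W2,
      (∀ s : Set (ConceptTensor V1 V2), h (sSup s) = sSup (h '' s)) ∧
      ∀ (x : V1) (y : V2), h (wedge x y) = wedge (f x) (g y)) ∧
    ((∀ s : Set V1, f (sInf s) = sInf (f '' s)) →
     (∀ s : Set V2, g (sInf s) = sInf (g '' s)) →
     ∀ h : ConceptTensor V1 V2 → ConceptTensor W1 W2,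
       ((∀ s : Set (ConceptTensor V1 V2), h (sSup s) = sSup (h '' s)) ∧
        ∀ (x : V1) (y : V2), h (wedge x y) = wedge (f x) (g y)) →
       ∀ s : Set (ConceptTensor V1 V2), h (sInf s) = sInf (h '' s)) := by
  constructor
  · refine ⟨TensorOfMapsAux.tmap f g,
      ⟨TensorOfMapsAux.tmap_sSup hf hg, TensorOfMapsAux.tmap_wedge hf hg⟩, ?_⟩
    rintro h ⟨hsup, hw⟩
    funext c
    exact TensorOfMapsAux.unique_aux h hsup hw c
  · rintro hf' hg' h ⟨hsup, hw⟩ s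
    have he : h = TensorOfMapsAux.tmap f g :=
      funext fun c => TensorOfMapsAux.unique_aux h hsup hw c
    rw [he]
    exact TensorOfMapsAux.tmap_sInf hf hg hf' hg' s
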